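/- arXiv:math/0411277 — 4 statements merged into one kernel-verified Lean document; each statement's English description precedes it below -/
import Mathlib

section
/- Let B be a 2m×2m skew-symmetric matrix over a commutative ring, viewed as an m×m array of 2×2 blocks B(r,s). Let J_m be the block-diagonal skew-symmetric matrix whose (r,r)-block is [[0,1],[-1,0]]. Then for any scalar z, pf(J_m + zB) = ∑_{k=0}^{m} z^k ∑_{1 ≤ s_1 < ... < s_k ≤ m} pf(B[s_1,...,s_k]), where B[s_1,...,s_k] is the 2k×2k skew-symmetric submatrix formed by the blocks B(s_i,s_j). -/
/-!
Write `pf` as a sum over sorted pairings `σ` of `Fin (2m)` (pairs `(σ(2j), σ(2j+1))`), and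
expand `∏ⱼ (J + zB)(σ(2j), σ(2j+1))`. Since `J` is nonzero above the diagonal only on the
diagonal blocks `(2r, 2r+1)`, the product becomes a sum over sets `S` of pairs such that every
pair outside `S` is a diagonal block, with term `z^|S| ∏_{j ∈ S} B(σ(2j), σ(2j+1))`.
If `|S| = k`, the pairs in `S` cover exactly `k` blocks `t₁ < ⋯ < t_k`, and in those blocks
they form a sorted pairing `τ` of `Fin (2k)`. Conversely `(t, τ)` determines `(σ, S)`: transport
`τ` along the block embedding of `t`, extend by the identity, and re-sort the pairs. Neither
step changes the sign (re-sorting permutes whole pairs), so the terms with `|S| = k` add up to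
`∑_t pf (B[t])`.
-/

open Matrix
open scoped Classical

/-- The Pfaffian of an `n × n` skew-symmetric matrix (meaningful for even `n`),
defined as the sum over permutations `σ` with `σ(2j) < σ(2j+1)` for all `j` and
`σ(0) < σ(2) < ⋯` of `sgn(σ) ∏ⱼ A (σ(2j)) (σ(2j+1))`. -/
noncomputable def pf {n : ℕ} {R : Type*} [CommRing R] (A : Matrix (Fin n) (Fin n) R) : R :=
  ∑ σ ∈ Finset.univ.filter (fun σ : Equiv.Perm (Fin n) =>
      (∀ j : Fin (n / 2),
        (σ ⟨2 * j.val, by have := j.isLt; omega⟩).val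
          < (σ ⟨2 * j.val + 1, by have := j.isLt; omega⟩).val) ∧
      (∀ j k : Fin (n / 2), j < k →
        (σ ⟨2 * j.val, by have := j.isLt; omega⟩).val
          < (σ ⟨2 * k.val, by have := k.isLt; omega⟩).val)),
    ((Equiv.Perm.sign σ : ℤ) : R) *
      ∏ j : Fin (n / 2),
        A (σ ⟨2 * j.val, by have := j.isLt; omega⟩) (σ ⟨2 * j.val + 1, by have := j.isLt; omega⟩)

/-- The `2m × 2m` block-diagonal skew-symmetric matrix with `2 × 2` diagonal
blocks `[[0,1],[-1,0]]`. -/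
def Jmat (m : ℕ) {R : Type*} [CommRing R] : Matrix (Fin (2 * m)) (Fin (2 * m)) R :=
  fun i j => if i.val % 2 = 0 ∧ j.val = i.val + 1 then 1
    else if j.val % 2 = 0 ∧ i.val = j.val + 1 then -1 else 0

/-- The embedding `Fin (2k) → Fin (2m)` sending the `2 × 2` block positions of the
block indexed by `i` to those of the block indexed by `t i`. -/
def emb {m k : ℕ} (t : Fin k → Fin m) (i : Fin (2 * k)) : Fin (2 * m) :=
  have h : i.val / 2 < k := by have := i.isLt; omega
  ⟨2 * (t ⟨i.val / 2, h⟩).val + i.val % 2, by have := (t ⟨i.val / 2, h⟩).isLt; omega⟩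

/-- The `2k × 2k` skew-symmetric submatrix of a `2m × 2m` matrix `B` formed by the
`2 × 2` blocks `B(t i, t j)`. -/
def blockSub {R : Type*} [CommRing R] {m k : ℕ} (B : Matrix (Fin (2 * m)) (Fin (2 * m)) R)
    (t : Fin k → Fin m) : Matrix (Fin (2 * k)) (Fin (2 * k)) R :=
  B.submatrix (emb t) (emb t)

open Finset Equiv Equiv.Perm

namespace BlockPfaffian

variable {m k : ℕ}

def blockFst (j : Fin m) : Fin (2 * m) := ⟨2 * j, by omega⟩

def blockSnd (j : Fin m) : Fin (2 * m) := ⟨2 * j + 1, by omega⟩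

def blockOf (x : Fin (2 * m)) : Fin m := ⟨x / 2, by omega⟩

@[simp] lemma val_blockFst (j : Fin m) : (blockFst j : ℕ) = 2 * j := rfl

@[simp] lemma val_blockSnd (j : Fin m) : (blockSnd j : ℕ) = 2 * j + 1 := rfl

@[simp] lemma val_blockOf (x : Fin (2 * m)) : (blockOf x : ℕ) = x / 2 := rfl

@[simp] lemma blockOf_blockFst (j : Fin m) : blockOf (blockFst j) = j := by ext; simp

@[simp] lemma blockOf_blockSnd (j : Fin m) : blockOf (blockSnd j) = j := by
  ext; simp only [val_blockOf, val_blockSnd]; omega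

lemma blockFst_injective : Function.Injective (blockFst (m := m)) :=
  fun _ _ h => by simpa using congrArg blockOf h

lemma eq_blockFst_or_eq_blockSnd (x : Fin (2 * m)) :
    x = blockFst (blockOf x) ∨ x = blockSnd (blockOf x) := by
  rcases Nat.mod_two_eq_zero_or_one x with h | h
  · left; ext; simp only [val_blockFst, val_blockOf]; omega
  · right; ext; simp only [val_blockSnd, val_blockOf]; omega

lemma funext_blocks {α : Type*} {f g : Fin (2 * m) → α}
    (h : ∀ j, f (blockFst j) = g (blockFst j) ∧ f (blockSnd j) = g (blockSnd j)) : f = g := by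
  funext x
  rcases eq_blockFst_or_eq_blockSnd x with hx | hx <;> rw [hx]
  exacts [(h _).1, (h _).2]

lemma val_emb (t : Fin k → Fin m) (x : Fin (2 * k)) :
    (emb t x : ℕ) = 2 * t (blockOf x) + x % 2 := rfl

lemma blockOf_emb (t : Fin k → Fin m) (x : Fin (2 * k)) : blockOf (emb t x) = t (blockOf x) := by
  ext; simp only [val_blockOf, val_emb]; omega

@[simp] lemma emb_blockFst (t : Fin k → Fin m) (i : Fin k) :
    emb t (blockFst i) = blockFst (t i) := by
  ext; simp [val_emb]

@[simp] lemma emb_blockSnd (t : Fin k → Fin m) (i : Fin k) :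
    emb t (blockSnd i) = blockSnd (t i) := by
  ext; simp [val_emb]

lemma emb_strictMono {t : Fin k → Fin m} (ht : StrictMono t) : StrictMono (emb t) := by
  intro x y hxy
  have hxy' : (x : ℕ) < y := hxy
  rw [Fin.lt_def, val_emb, val_emb]
  rcases (show blockOf x ≤ blockOf y from Nat.div_le_div_right hxy.le).lt_or_eq with h | h
  · have : (t (blockOf x) : ℕ) < t (blockOf y) := ht h
    omega
  · have : (x : ℕ) / 2 = y / 2 := congrArg Fin.val h
    rw [h]
    omega

lemma mem_range_emb_iff (t : Fin k → Fin m) (y : Fin (2 * m)) :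
    y ∈ Set.range (emb t) ↔ blockOf y ∈ Set.range t := by
  constructor
  · rintro ⟨x, rfl⟩
    exact ⟨blockOf x, (blockOf_emb t x).symm⟩
  · rintro ⟨i, hi⟩
    rcases eq_blockFst_or_eq_blockSnd y with hy | hy <;> rw [hy, ← hi]
    exacts [⟨blockFst i, emb_blockFst t i⟩, ⟨blockSnd i, emb_blockSnd t i⟩]

def IsSortedPairing (σ : Perm (Fin (2 * m))) : Prop :=
  (∀ j, σ (blockFst j) < σ (blockSnd j)) ∧ StrictMono fun j => σ (blockFst j)

lemma pf_eq_sum_sortedPairing {R : Type*} [CommRing R] (A : Matrix (Fin (2 * m)) (Fin (2 * m)) R) :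
    pf A = ∑ σ with IsSortedPairing σ,
      (sign σ : ℤ) * ∏ j, A (σ (blockFst j)) (σ (blockSnd j)) := by
  have hm : 2 * m / 2 = m := by omega
  unfold pf
  refine sum_congr (filter_congr fun σ _ => ?_) fun σ _ => ?_
  · refine and_congr ⟨fun h j => h ⟨j, by omega⟩, fun h j => h ⟨j, by omega⟩⟩
      ⟨fun h j l hjl => h ⟨j, by omega⟩ ⟨l, by omega⟩ hjl,
       fun h j l hjl => h (a := ⟨j, by omega⟩) (b := ⟨l, by omega⟩) hjl⟩
  · congr 1
    exact Fintype.prod_equiv (finCongr hm) _ _ fun _ => rfl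

lemma IsSortedPairing.ext {σ₁ σ₂ : Perm (Fin (2 * m))} (h₁ : IsSortedPairing σ₁)
    (h₂ : IsSortedPairing σ₂)
    (h : ∀ j, ∃ l,
      σ₁ (blockFst j) = σ₂ (blockFst l) ∧ σ₁ (blockSnd j) = σ₂ (blockSnd l)) :
    σ₁ = σ₂ := by
  choose f hf using h
  have hf_mono : StrictMono f := fun j l hjl =>
    h₂.2.lt_iff_lt.mp (by simpa only [← (hf _).1] using h₁.2 hjl)
  have hf_id : f = id := by
    refine (hf_mono.range_inj strictMono_id).mp ?_
    rw [(Finite.injective_iff_surjective.mp hf_mono.injective).range_eq, Set.range_id]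
  refine Equiv.ext (congrFun (funext_blocks fun j => ?_))
  simpa [hf_id] using hf j

def pairIndex (m : ℕ) : Fin m × Fin 2 ≃ Fin (2 * m) :=
  finProdFinEquiv.trans (finCongr (Nat.mul_comm m 2))

lemma pairIndex_zero (j : Fin m) : pairIndex m (j, 0) = blockFst j := by
  ext; simp [pairIndex]

lemma pairIndex_one (j : Fin m) : pairIndex m (j, 1) = blockSnd j := by
  ext; simp [pairIndex, Nat.add_comm]

def blockPerm (π : Perm (Fin m)) : Perm (Fin (2 * m)) :=
  (pairIndex m).permCongr (prodCongrLeft fun _ => π)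

@[simp] lemma blockPerm_blockFst (π : Perm (Fin m)) (j : Fin m) :
    blockPerm π (blockFst j) = blockFst (π j) := by
  simp [blockPerm, ← pairIndex_zero, permCongr_apply]

@[simp] lemma blockPerm_blockSnd (π : Perm (Fin m)) (j : Fin m) :
    blockPerm π (blockSnd j) = blockSnd (π j) := by
  simp [blockPerm, ← pairIndex_one, permCongr_apply]

lemma sign_blockPerm (π : Perm (Fin m)) : sign (blockPerm π) = 1 := by
  rw [blockPerm, sign_permCongr, sign_prodCongrLeft, Finset.prod_const, Finset.card_univ,
    Fintype.card_fin, Int.units_sq]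

noncomputable def pairOrder (ψ : Perm (Fin (2 * m))) : Perm (Fin m) :=
  Tuple.sort fun j => ψ (blockFst j)

noncomputable def sortPairs (ψ : Perm (Fin (2 * m))) : Perm (Fin (2 * m)) :=
  ψ * blockPerm (pairOrder ψ)

@[simp] lemma sortPairs_blockFst (ψ : Perm (Fin (2 * m))) (j : Fin m) :
    sortPairs ψ (blockFst j) = ψ (blockFst (pairOrder ψ j)) := by
  simp [sortPairs]

@[simp] lemma sortPairs_blockSnd (ψ : Perm (Fin (2 * m))) (j : Fin m) :
    sortPairs ψ (blockSnd j) = ψ (blockSnd (pairOrder ψ j)) := by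
  simp [sortPairs]

lemma sign_sortPairs (ψ : Perm (Fin (2 * m))) : sign (sortPairs ψ) = sign ψ := by
  rw [sortPairs, Perm.sign_mul, sign_blockPerm, mul_one]

lemma isSortedPairing_sortPairs {ψ : Perm (Fin (2 * m))}
    (hψ : ∀ j, ψ (blockFst j) < ψ (blockSnd j)) : IsSortedPairing (sortPairs ψ) := by
  refine ⟨fun j => by simpa using hψ _, ?_⟩
  simp only [sortPairs_blockFst]
  exact (Tuple.monotone_sort _).strictMono_of_injective
    ((ψ.injective.comp blockFst_injective).comp (pairOrder ψ).injective)

section BlockExtend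

variable {t : Fin k → Fin m} (ht : StrictMono t) (τ : Perm (Fin (2 * k)))

noncomputable def blockExtend : Perm (Fin (2 * m)) :=
  τ.extendDomain (Equiv.ofInjective (emb t) (emb_strictMono ht).injective)

lemma blockExtend_emb (x : Fin (2 * k)) : blockExtend ht τ (emb t x) = emb t (τ x) :=
  extendDomain_apply_image τ _ x

lemma blockExtend_of_notMem {y : Fin (2 * m)} (hy : blockOf y ∉ Set.range t) :
    blockExtend ht τ y = y :=
  extendDomain_apply_not_subtype τ _ (by rwa [mem_range_emb_iff])

lemma blockExtend_blockFst_of_notMem {l : Fin m} (hl : l ∉ Set.range t) :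
    blockExtend ht τ (blockFst l) = blockFst l :=
  blockExtend_of_notMem ht τ (by rwa [blockOf_blockFst])

lemma blockExtend_blockSnd_of_notMem {l : Fin m} (hl : l ∉ Set.range t) :
    blockExtend ht τ (blockSnd l) = blockSnd l :=
  blockExtend_of_notMem ht τ (by rwa [blockOf_blockSnd])

lemma sign_blockExtend : sign (blockExtend ht τ) = sign τ :=
  sign_extendDomain τ _

lemma blockExtend_blockFst (i : Fin k) :
    blockExtend ht τ (blockFst (t i)) = emb t (τ (blockFst i)) := by
  rw [← emb_blockFst, blockExtend_emb]

lemma blockExtend_blockSnd (i : Fin k) :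
    blockExtend ht τ (blockSnd (t i)) = emb t (τ (blockSnd i)) := by
  rw [← emb_blockSnd, blockExtend_emb]

variable {τ}

lemma blockExtend_blockFst_lt_blockSnd (hτ : IsSortedPairing τ) (l : Fin m) :
    blockExtend ht τ (blockFst l) < blockExtend ht τ (blockSnd l) := by
  by_cases hl : l ∈ Set.range t
  · obtain ⟨i, rfl⟩ := hl
    rw [blockExtend_blockFst, blockExtend_blockSnd]
    exact emb_strictMono ht (hτ.1 i)
  · rw [blockExtend_blockFst_of_notMem ht τ hl, blockExtend_blockSnd_of_notMem ht τ hl]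
    simp [Fin.lt_def]

lemma blockExtend_blockFst_lt_iff (hτ : IsSortedPairing τ) (a b : Fin k) :
    blockExtend ht τ (blockFst (t a)) < blockExtend ht τ (blockFst (t b)) ↔ t a < t b := by
  rw [blockExtend_blockFst, blockExtend_blockFst, (emb_strictMono ht).lt_iff_lt,
    hτ.2.lt_iff_lt, ht.lt_iff_lt]

variable (τ)

lemma blockOf_blockExtend_blockFst_mem_range_iff (l : Fin m) :
    blockOf (blockExtend ht τ (blockFst l)) ∈ Set.range t ↔ l ∈ Set.range t := by
  by_cases hl : l ∈ Set.range t
  · obtain ⟨i, rfl⟩ := hl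
    simp [blockExtend_blockFst, blockOf_emb]
  · rw [blockExtend_blockFst_of_notMem ht τ hl, blockOf_blockFst]

end BlockExtend

def IsBlockPairAt (σ : Perm (Fin (2 * m))) (j : Fin m) : Prop :=
  ∃ r, σ (blockFst j) = blockFst r ∧ σ (blockSnd j) = blockSnd r

lemma IsBlockPairAt.apply_blockFst {σ : Perm (Fin (2 * m))} {j : Fin m}
    (h : IsBlockPairAt σ j) : σ (blockFst j) = blockFst (blockOf (σ (blockFst j))) := by
  obtain ⟨r, h₁, -⟩ := h
  rw [h₁, blockOf_blockFst]

/-- `(σ, S)` indexes a term of the expansion of `pf (Jmat m + z • B)`: the pairs of `σ` in `S`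
contribute an entry of `B`, the others an entry `1` of `Jmat m`. -/
noncomputable def markedPairings (m : ℕ) : Finset (Perm (Fin (2 * m)) × Finset (Fin m)) :=
  univ.filter fun p => IsSortedPairing p.1 ∧ ∀ j ∉ p.2, IsBlockPairAt p.1 j

lemma mem_markedPairings {p : Perm (Fin (2 * m)) × Finset (Fin m)} :
    p ∈ markedPairings m ↔ IsSortedPairing p.1 ∧ ∀ j ∉ p.2, IsBlockPairAt p.1 j := by
  simp [markedPairings]

section MarkedPairing

variable {t : Fin k → Fin m} (ht : StrictMono t) (τ : Perm (Fin (2 * k)))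

/-- Inverse to reading off from `(σ, S)` the blocks `t` covered by the pairs in `S` and the
sorted pairing `τ` that these pairs induce on them. -/
noncomputable def markedPairing : Perm (Fin (2 * m)) × Finset (Fin m) :=
  (sortPairs (blockExtend ht τ),
    univ.filter fun j => pairOrder (blockExtend ht τ) j ∈ Set.range t)

lemma sign_markedPairing_fst : sign (markedPairing ht τ).1 = sign τ := by
  rw [markedPairing, sign_sortPairs, sign_blockExtend]

lemma mem_markedPairing_snd_iff (j : Fin m) :
    j ∈ (markedPairing ht τ).2 ↔
      blockOf ((markedPairing ht τ).1 (blockFst j)) ∈ Set.range t := by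
  simp only [markedPairing, mem_filter, mem_univ, true_and, sortPairs_blockFst,
    blockOf_blockExtend_blockFst_mem_range_iff]

lemma card_markedPairing_snd : (markedPairing ht τ).2.card = k := by
  have h : (markedPairing ht τ).2 =
      (univ.image t).map (pairOrder (blockExtend ht τ)).symm.toEmbedding := by
    ext j
    simp [markedPairing]
  rw [h, card_map, card_image_of_injective _ ht.injective, card_univ, Fintype.card_fin]

lemma isBlockPairAt_markedPairing_fst {j : Fin m} (hj : j ∉ (markedPairing ht τ).2) :
    IsBlockPairAt (markedPairing ht τ).1 j := by
  have hl : pairOrder (blockExtend ht τ) j ∉ Set.range t := by simpa [markedPairing] using hj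
  exact ⟨pairOrder (blockExtend ht τ) j, by
    simp [markedPairing, blockExtend_blockFst_of_notMem ht τ hl,
      blockExtend_blockSnd_of_notMem ht τ hl]⟩

lemma mem_range_iff_forall_notMem_markedPairing_snd (r : Fin m) :
    r ∈ Set.range t ↔
      ∀ j ∉ (markedPairing ht τ).2, blockOf ((markedPairing ht τ).1 (blockFst j)) ≠ r := by
  refine ⟨fun hr j hj h => hj ((mem_markedPairing_snd_iff ht τ j).2 (h ▸ hr)), fun h => ?_⟩
  by_contra hr
  refine h ((pairOrder (blockExtend ht τ)).symm r) (by simpa [markedPairing] using hr) ?_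
  simp [markedPairing, blockExtend_blockFst_of_notMem ht τ hr]

variable {τ} (hτ : IsSortedPairing τ)
include hτ

lemma markedPairing_mem : markedPairing ht τ ∈ markedPairings m :=
  mem_markedPairings.2 ⟨isSortedPairing_sortPairs (blockExtend_blockFst_lt_blockSnd ht hτ),
    fun _ => isBlockPairAt_markedPairing_fst ht τ⟩

lemma pairOrder_comp_eq {u : Fin k → Fin m} (hu : StrictMono u)
    (huS : Set.range u = (markedPairing ht τ).2) :
    pairOrder (blockExtend ht τ) ∘ u = t := by
  have hmem : ∀ i, ∃ a, t a = pairOrder (blockExtend ht τ) (u i) := fun i => by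
    have : u i ∈ (markedPairing ht τ).2 := by
      rw [← Finset.mem_coe, ← huS]
      exact ⟨i, rfl⟩
    simpa [markedPairing] using this
  refine (StrictMono.range_inj ?_ ht).1 ?_
  · intro i i' hii'
    obtain ⟨a, ha⟩ := hmem i
    obtain ⟨b, hb⟩ := hmem i'
    have hsorted :=
      (isSortedPairing_sortPairs (blockExtend_blockFst_lt_blockSnd ht hτ)).2 (hu hii')
    simp only [sortPairs_blockFst, ← ha, ← hb] at hsorted
    simpa only [Function.comp_apply, ← ha, ← hb] using
      (blockExtend_blockFst_lt_iff ht hτ a b).1 hsorted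
  · ext r
    refine ⟨fun ⟨i, hi⟩ => ?_, fun ⟨a, ha⟩ => ?_⟩
    · obtain ⟨a, ha⟩ := hmem i
      exact ⟨a, ha.trans hi⟩
    · have : (pairOrder (blockExtend ht τ)).symm (t a) ∈ (markedPairing ht τ).2 := by
        simp [markedPairing]
      rw [← Finset.mem_coe, ← huS] at this
      obtain ⟨i, hi⟩ := this
      exact ⟨i, by rw [Function.comp_apply, hi, apply_symm_apply, ha]⟩

lemma markedPairing_fst_emb {u : Fin k → Fin m} (hu : StrictMono u)
    (huS : Set.range u = (markedPairing ht τ).2) (x : Fin (2 * k)) :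
    (markedPairing ht τ).1 (emb u x) = emb t (τ x) := by
  refine congrFun (funext_blocks (f := fun x => (markedPairing ht τ).1 (emb u x))
    (g := fun x => emb t (τ x)) fun i => ?_) x
  have hi : pairOrder (blockExtend ht τ) (u i) = t i :=
    congrFun (pairOrder_comp_eq ht hτ hu huS) i
  simp [markedPairing, hi, blockExtend_blockFst, blockExtend_blockSnd]

lemma prod_markedPairing {M : Type*} [CommMonoid M] (f : Fin (2 * m) → Fin (2 * m) → M) :
    ∏ j ∈ (markedPairing ht τ).2,
        f ((markedPairing ht τ).1 (blockFst j)) ((markedPairing ht τ).1 (blockSnd j)) =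
      ∏ i, f (emb t (τ (blockFst i))) (emb t (τ (blockSnd i))) := by
  set u := (markedPairing ht τ).2.orderEmbOfFin (card_markedPairing_snd ht τ)
  have hu := markedPairing_fst_emb ht hτ u.strictMono (range_orderEmbOfFin _ _)
  rw [← image_orderEmbOfFin_univ _ (card_markedPairing_snd ht τ),
    prod_image fun a _ b _ h => u.injective h]
  refine prod_congr rfl fun i _ => ?_
  rw [← emb_blockFst u, ← emb_blockSnd u, hu, hu]

end MarkedPairing

lemma markedPairing_injective {t₁ t₂ : Fin k → Fin m} (ht₁ : StrictMono t₁)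
    (ht₂ : StrictMono t₂) {τ₁ τ₂ : Perm (Fin (2 * k))} (hτ₁ : IsSortedPairing τ₁)
    (hτ₂ : IsSortedPairing τ₂) (h : markedPairing ht₁ τ₁ = markedPairing ht₂ τ₂) :
    t₁ = t₂ ∧ τ₁ = τ₂ := by
  obtain rfl : t₁ = t₂ := (ht₁.range_inj ht₂).1 <| Set.ext fun r => by
    rw [mem_range_iff_forall_notMem_markedPairing_snd ht₁ τ₁,
      mem_range_iff_forall_notMem_markedPairing_snd ht₂ τ₂, h]
  refine ⟨rfl, Equiv.ext fun x => (emb_strictMono ht₁).injective ?_⟩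
  set u := (markedPairing ht₂ τ₂).2.orderEmbOfFin (card_markedPairing_snd ht₂ τ₂)
  have hu : Set.range u = (markedPairing ht₂ τ₂).2 := range_orderEmbOfFin _ _
  rw [← markedPairing_fst_emb ht₁ hτ₁ u.strictMono (h ▸ hu) x, h,
    markedPairing_fst_emb ht₂ hτ₂ u.strictMono hu x]

lemma isSortedPairing_of_emb_comp {t u : Fin k → Fin m} (ht : StrictMono t) (hu : StrictMono u)
    {σ : Perm (Fin (2 * m))} {τ : Perm (Fin (2 * k))} (hσ : IsSortedPairing σ)
    (h : ∀ x, emb t (τ x) = σ (emb u x)) : IsSortedPairing τ := by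
  refine ⟨fun i => (emb_strictMono ht).lt_iff_lt.1 ?_, fun i i' hii' =>
    (emb_strictMono ht).lt_iff_lt.1 ?_⟩
  · simpa only [h, emb_blockFst, emb_blockSnd] using hσ.1 (u i)
  · simpa only [h, emb_blockFst] using hσ.2 (hu hii')

section Unmark

variable {σ : Perm (Fin (2 * m))} {S : Finset (Fin m)}

/-- For `(σ, S) ∈ markedPairings m`, the blocks covered by the pairs in `S`. -/
def markedBlocks (σ : Perm (Fin (2 * m))) (S : Finset (Fin m)) : Finset (Fin m) :=
  univ.filter fun r => ∀ j ∉ S, blockOf (σ (blockFst j)) ≠ r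

variable (hσ : (σ, S) ∈ markedPairings m)
include hσ

lemma card_markedBlocks (hS : S.card = k) : (markedBlocks σ S).card = k := by
  have h : markedBlocks σ S = (Sᶜ.image fun j => blockOf (σ (blockFst j)))ᶜ := by
    ext r; simp [markedBlocks]
  have hinj : Set.InjOn (fun j => blockOf (σ (blockFst j))) ↑(Sᶜ) := fun j hj l hl hjl => by
    have hj' := (mem_markedPairings.1 hσ).2 j (by simpa using hj)
    have hl' := (mem_markedPairings.1 hσ).2 l (by simpa using hl)
    refine blockFst_injective (σ.injective ?_)
    rw [hj'.apply_blockFst, hl'.apply_blockFst]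
    exact congrArg blockFst hjl
  have hkm : k ≤ m := hS ▸ (card_le_univ S).trans_eq (Fintype.card_fin m)
  rw [h, card_compl, card_image_of_injOn hinj, card_compl, hS, Fintype.card_fin]
  omega

lemma blockOf_apply_mem_markedBlocks {x : Fin (2 * m)} (hx : blockOf x ∈ S) :
    blockOf (σ x) ∈ markedBlocks σ S := by
  simp only [markedBlocks, mem_filter, mem_univ, true_and]
  intro j hj hjx
  obtain ⟨r, h₁, h₂⟩ := (mem_markedPairings.1 hσ).2 j hj
  rw [h₁, blockOf_blockFst] at hjx
  have : x = blockFst j ∨ x = blockSnd j := by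
    rcases eq_blockFst_or_eq_blockSnd (σ x) with h | h <;> rw [← hjx] at h
    exacts [.inl (σ.injective (h.trans h₁.symm)), .inr (σ.injective (h.trans h₂.symm))]
  rcases this with rfl | rfl <;> exact hj (by simpa using hx)

lemma mem_iff_blockOf_mem_markedBlocks (j : Fin m) :
    j ∈ S ↔ blockOf (σ (blockFst j)) ∈ markedBlocks σ S := by
  refine ⟨fun hj => blockOf_apply_mem_markedBlocks hσ (by simpa using hj), fun h => ?_⟩
  by_contra hj
  simp only [markedBlocks, mem_filter, mem_univ, true_and] at h
  exact h j hj rfl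

lemma markedPairing_eq {t u : Fin k → Fin m} (ht : StrictMono t) (hu : StrictMono u)
    (htS : Set.range t = markedBlocks σ S) (huS : Set.range u = S) {τ : Perm (Fin (2 * k))}
    (hτ : ∀ x, emb t (τ x) = σ (emb u x)) : markedPairing ht τ = (σ, S) := by
  have hτ' := isSortedPairing_of_emb_comp ht hu (mem_markedPairings.1 hσ).1 hτ
  have hσ' := mem_markedPairings.1 (markedPairing_mem ht hτ')
  set u' := (markedPairing ht τ).2.orderEmbOfFin (card_markedPairing_snd ht τ)
  have hu' := markedPairing_fst_emb ht hτ' u'.strictMono (range_orderEmbOfFin _ _)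
  have hfst : (markedPairing ht τ).1 = σ := by
    refine (IsSortedPairing.ext (mem_markedPairings.1 hσ).1 hσ'.1 fun j => ?_).symm
    by_cases hj : j ∈ S
    · obtain ⟨i, rfl⟩ : j ∈ Set.range u := huS ▸ hj
      exact ⟨u' i, by simp only [← emb_blockFst, ← emb_blockSnd, ← hτ, hu', and_self]⟩
    · obtain ⟨r, h₁, h₂⟩ := (mem_markedPairings.1 hσ).2 j hj
      have hr : r ∉ Set.range t := by
        rw [htS]
        simpa [markedBlocks] using ⟨j, hj, by rw [h₁, blockOf_blockFst]⟩
      rw [mem_range_iff_forall_notMem_markedPairing_snd ht τ] at hr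
      push Not at hr
      obtain ⟨l, hl, hlr⟩ := hr
      obtain ⟨r', h₁', h₂'⟩ := hσ'.2 l hl
      obtain rfl : r' = r := by rw [← hlr, h₁', blockOf_blockFst]
      exact ⟨l, h₁.trans h₁'.symm, h₂.trans h₂'.symm⟩
  refine Prod.ext hfst (Finset.ext fun j => ?_)
  rw [mem_markedPairing_snd_iff, hfst, htS, Finset.mem_coe,
    ← mem_iff_blockOf_mem_markedBlocks hσ]

lemma exists_markedPairing_eq (hS : S.card = k) :
    ∃ (t : Fin k → Fin m) (ht : StrictMono t) (τ : Perm (Fin (2 * k))),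
      IsSortedPairing τ ∧ markedPairing ht τ = (σ, S) := by
  set t := (markedBlocks σ S).orderEmbOfFin (card_markedBlocks hσ hS)
  set u := S.orderEmbOfFin hS
  have hmem : ∀ x, σ (emb u x) ∈ Set.range (emb t) := fun x => by
    rw [mem_range_emb_iff, range_orderEmbOfFin]
    exact blockOf_apply_mem_markedBlocks hσ (by rw [blockOf_emb]; exact orderEmbOfFin_mem _ _ _)
  choose f hf using hmem
  have hf_inj : Function.Injective f := fun a b hab =>
    (emb_strictMono u.strictMono).injective (σ.injective (by rw [← hf, ← hf, hab]))
  set τ := Equiv.ofBijective f (Finite.injective_iff_bijective.1 hf_inj)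
  exact ⟨t, t.strictMono, τ,
    isSortedPairing_of_emb_comp t.strictMono u.strictMono (mem_markedPairings.1 hσ).1 hf,
    markedPairing_eq hσ t.strictMono u.strictMono (range_orderEmbOfFin _ _)
      (range_orderEmbOfFin _ _) hf⟩

end Unmark

lemma sum_markedPairings_card_eq {R : Type*} [CommRing R]
    (B : Matrix (Fin (2 * m)) (Fin (2 * m)) R) :
    ∑ p ∈ markedPairings m with p.2.card = k,
        (sign p.1 : ℤ) * ∏ j ∈ p.2, B (p.1 (blockFst j)) (p.1 (blockSnd j)) =
      ∑ t : Fin k → Fin m with StrictMono t, pf (blockSub B t) := by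
  simp only [pf_eq_sum_sortedPairing, blockSub, Matrix.submatrix_apply]
  rw [← sum_product']
  symm
  refine sum_bij (fun a ha => markedPairing (mem_filter.1 (mem_product.1 ha).1).2 a.2)
    (fun a ha => ?_) (fun a ha b hb h => ?_) (fun p hp => ?_) (fun a ha => ?_)
  · simp only [mem_product, mem_filter, mem_univ, true_and] at ha
    exact mem_filter.2 ⟨markedPairing_mem ha.1 ha.2, card_markedPairing_snd ha.1 a.2⟩
  · simp only [mem_product, mem_filter, mem_univ, true_and] at ha hb
    obtain ⟨h₁, h₂⟩ := markedPairing_injective ha.1 hb.1 ha.2 hb.2 h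
    exact Prod.ext h₁ h₂
  · obtain ⟨hp, hk⟩ := mem_filter.1 hp
    obtain ⟨t, ht, τ, hτ, h⟩ := exists_markedPairing_eq hp hk
    exact ⟨(t, τ), by simpa using ⟨ht, hτ⟩, h⟩
  · rw [sign_markedPairing_fst,
      prod_markedPairing _ (mem_filter.1 (mem_product.1 ha).2).2 fun x y => B x y]

lemma prod_add_ite_eq_sum {ι M : Type*} [Fintype ι] [CommSemiring M] (f : ι → M)
    (p : ι → Prop) :
    ∏ i, (f i + if p i then 1 else 0) = ∑ S with ∀ i ∉ S, p i, ∏ i ∈ S, f i := by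
  rw [prod_add, sum_filter, powerset_univ]
  refine sum_congr rfl fun S _ => ?_
  simp [prod_boole]

lemma Jmat_apply_of_lt {R : Type*} [CommRing R] {x y : Fin (2 * m)} (h : x < y) :
    Jmat m x y = if ∃ r, x = blockFst r ∧ y = blockSnd r then (1 : R) else 0 := by
  have hxy : (x : ℕ) < y := h
  unfold Jmat
  rw [if_neg (show ¬((y : ℕ) % 2 = 0 ∧ (x : ℕ) = y + 1) by omega)]
  refine if_congr ⟨fun h => ⟨blockOf x, ?_, ?_⟩, fun ⟨r, hx, hy⟩ => ?_⟩ rfl rfl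
  · ext; simp only [val_blockFst, val_blockOf]; omega
  · ext; simp only [val_blockSnd, val_blockOf]; omega
  · subst hx hy; simp

lemma Jmat_add_smul_apply {R : Type*} [CommRing R] (B : Matrix (Fin (2 * m)) (Fin (2 * m)) R)
    (z : R) {σ : Perm (Fin (2 * m))} (hσ : IsSortedPairing σ) (j : Fin m) :
    (Jmat m + z • B : Matrix (Fin (2 * m)) (Fin (2 * m)) R) (σ (blockFst j)) (σ (blockSnd j)) =
      z * B (σ (blockFst j)) (σ (blockSnd j)) + if IsBlockPairAt σ j then 1 else 0 := by
  rw [Matrix.add_apply, Matrix.smul_apply, smul_eq_mul, Jmat_apply_of_lt (hσ.1 j), add_comm]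
  exact congrArg _ (if_congr Iff.rfl rfl rfl)

lemma pf_Jmat_add_smul_eq_sum {R : Type*} [CommRing R]
    (B : Matrix (Fin (2 * m)) (Fin (2 * m)) R) (z : R) :
    pf (Jmat m + z • B) = ∑ p ∈ markedPairings m,
      z ^ p.2.card * ((sign p.1 : ℤ) * ∏ j ∈ p.2, B (p.1 (blockFst j)) (p.1 (blockSnd j))) := by
  rw [pf_eq_sum_sortedPairing, sum_finset_product _ (univ.filter IsSortedPairing)
    (fun σ => univ.filter fun S => ∀ j ∉ S, IsBlockPairAt σ j) fun p => by simp [markedPairings]]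
  refine sum_congr rfl fun σ hσ => ?_
  rw [prod_congr rfl fun j _ => Jmat_add_smul_apply B z (mem_filter.1 hσ).2 j,
    prod_add_ite_eq_sum, mul_sum]
  refine sum_congr (by ext; simp) fun S _ => ?_
  rw [prod_mul_distrib, prod_const]
  ring

end BlockPfaffian

open BlockPfaffian

theorem pf_J_add_smul_general {R : Type*} [CommRing R] (m : ℕ)
    (B : Matrix (Fin (2 * m)) (Fin (2 * m)) R) (z : R) :
    pf (Jmat m + z • B) =
      ∑ k ∈ Finset.range (m + 1), z ^ k *
        ∑ t ∈ Finset.univ.filter (fun t : Fin k → Fin m => StrictMono t),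
          pf (blockSub B t) := by
  have hcard : ∀ p ∈ markedPairings m, p.2.card ∈ range (m + 1) := fun p _ =>
    mem_range.2 (Nat.lt_succ_of_le ((card_le_univ _).trans_eq (Fintype.card_fin m)))
  rw [pf_Jmat_add_smul_eq_sum, ← sum_fiberwise_of_maps_to hcard]
  refine sum_congr rfl fun k _ => ?_
  rw [← sum_markedPairings_card_eq, mul_sum]
  refine sum_congr rfl fun p hp => ?_
  rw [(mem_filter.1 hp).2]

theorem pf_J_add_smul {R : Type*} [CommRing R] (m : ℕ)
    (B : Matrix (Fin (2 * m)) (Fin (2 * m)) R) (hB : Bᵀ = -B) (z : R) :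
    pf (Jmat m + z • B) =
      ∑ k ∈ Finset.range (m + 1), z ^ k *
        ∑ t ∈ Finset.univ.filter (fun t : Fin k → Fin m => StrictMono t),
          pf (blockSub B t) :=
  pf_J_add_smul_general m B z
end

section
/- Let A be an n×n matrix over a commutative ring. Then for any scalar z, det(I_n + zA) = ∑_{k=0}^{n} z^k ∑_{1 ≤ i_1 < ... < i_k ≤ n} det(A_{i_1...i_k}), where A_{i_1...i_k} is the principal submatrix of A on rows and columns i_1,...,i_k. -/
open Matrix

/-! Expanding `det (z • A + 1)` multilinearly in the rows gives one term for each set `S` of rows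
taken from `z • A`, the remaining rows being those of the identity. Such a matrix is block
triangular with an identity block off `S`, so its determinant is the principal minor of `z • A`
on `S`, namely `z ^ #S * det A_S`. -/

lemma Matrix.det_piecewise_one_eq_det_submatrix {ι R : Type*} [Fintype ι] [DecidableEq ι]
    [CommRing R] (B : Matrix ι ι R) (S : Finset ι) :
    (of (S.piecewise B (1 : Matrix ι ι R))).det =
      (B.submatrix (fun i : {x // x ∈ S} => i.val) (fun i : {x // x ∈ S} => i.val)).det := by
  set M := of (S.piecewise B (1 : Matrix ι ι R))
  have h_triangular : ∀ i, i ∉ S → ∀ j, j ∈ S → M i j = 0 := fun i hi j hj => by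
    simp only [M, of_apply, Finset.piecewise, hi, if_false]
    exact one_apply_ne fun hij => hi (hij ▸ hj)
  have h_block : toSquareBlockProp M (· ∈ S) =
      B.submatrix (fun i : {x // x ∈ S} => i.val) (fun i : {x // x ∈ S} => i.val) := by
    ext ⟨i, hi⟩ ⟨j, hj⟩
    simp [M, toSquareBlockProp, toBlock, Finset.piecewise, hi]
  have h_compl : toSquareBlockProp M (· ∉ S) = 1 := by
    ext ⟨i, hi⟩ ⟨j, hj⟩
    simp [M, toSquareBlockProp, toBlock, Finset.piecewise, hi, one_apply, Subtype.ext_iff]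
  rw [twoBlockTriangular_det M (· ∈ S) h_triangular, h_block, h_compl, det_one, mul_one]
  convert rfl

lemma Matrix.det_add_one_eq_sum_det_submatrix {ι R : Type*} [Fintype ι] [DecidableEq ι]
    [CommRing R] (B : Matrix ι ι R) :
    (B + 1).det = ∑ S : Finset ι,
      (B.submatrix (fun i : {x // x ∈ S} => i.val) (fun i : {x // x ∈ S} => i.val)).det :=
  ((detRowAlternating : (ι → R) [⋀^ι]→ₗ[R] R).toMultilinearMap.map_add_univ B
    (1 : Matrix ι ι R)).trans
      (Finset.sum_congr rfl fun S _ => det_piecewise_one_eq_det_submatrix B S)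

theorem det_one_add_smul_eq_sum_principal_minors {R : Type*} [CommRing R] (n : ℕ)
    (A : Matrix (Fin n) (Fin n) R) (z : R) :
    (1 + z • A).det =
      ∑ k ∈ Finset.range (n + 1), z ^ k *
        ∑ S ∈ (Finset.univ : Finset (Fin n)).powersetCard k,
          (A.submatrix (fun i : {x // x ∈ S} => i.val) (fun i : {x // x ∈ S} => i.val)).det := by
  rw [add_comm, det_add_one_eq_sum_det_submatrix, ← Finset.powerset_univ, Finset.sum_powerset,
    Finset.card_univ, Fintype.card_fin]
  refine Finset.sum_congr rfl fun k _ => ?_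
  rw [Finset.mul_sum]
  refine Finset.sum_congr rfl fun S hS => ?_
  rw [submatrix_smul, ← (Finset.mem_powersetCard.mp hS).2, ← Fintype.card_coe]
  exact det_smul _ z
end

section
/- Let B be a 2m×2m skew-symmetric matrix with 2×2 blocks B(r,s), and let J_m be the block-diagonal matrix with (r,r)-block [[0,1],[-1,0]]. For any cycle τ = (k_1,...,k_r) on {1,...,m}, the trace of the product (-J_1)B(k_1,k_2)·(-J_1)B(k_2,k_3)···(-J_1)B(k_r,k_1) equals 2·P(B)(τ), where P(B)(τ) = (1/2)∑_{i_1,...,i_r ∈ Z/2Z} (-1)^{i_1+...+i_r} B_{i_1,i_2+1}(k_1,k_2) B_{i_2,i_3+1}(k_2,k_3) ··· B_{i_r,i_1+1}(k_r,k_1). -/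
open Matrix
open scoped Classical

/-- The `(i,j)` entry (indices in `ZMod 2`) of the `2 × 2` block `B(r,s)` of a
`2m × 2m` matrix `B`. -/
def Bblk {m : ℕ} (B : Matrix (Fin (2 * m)) (Fin (2 * m)) ℂ) (r s : Fin m)
    (i j : ZMod 2) : ℂ :=
  B ⟨2 * r.val + i.val, by have := r.isLt; have := ZMod.val_lt i; omega⟩
    ⟨2 * s.val + j.val, by have := s.isLt; have := ZMod.val_lt j; omega⟩

/-- `P(B)(τ)` for the cycle `τ = (k 0, k 1, …, k (r-1))`:
`P(B)(τ) = (1/2) ∑_{i : Fin r → ZMod 2} (-1)^{∑ i_j}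
  B_{i_0, i_1+1}(k_0,k_1) ⋯ B_{i_{r-1}, i_0+1}(k_{r-1},k_0)`. -/
noncomputable def Pcyc {m r : ℕ} [NeZero r] (B : Matrix (Fin (2 * m)) (Fin (2 * m)) ℂ)
    (k : Fin r → Fin m) : ℂ :=
  (1 / 2) * ∑ i : Fin r → ZMod 2,
    (∏ j, (-1 : ℂ) ^ (i j).val) * ∏ j, Bblk B (k j) (k (j + 1)) (i j) (i (j + 1) + 1)

/-- The matrix `J_1 = [[0,1],[-1,0]]`. -/
def J1 : Matrix (Fin 2) (Fin 2) ℂ := !![0, 1; -1, 0]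

/-- The `2 × 2` block `B(r,s)` of `B` as a `2 × 2` matrix. -/
def blkM {m : ℕ} (B : Matrix (Fin (2 * m)) (Fin (2 * m)) ℂ) (r s : Fin m) :
    Matrix (Fin 2) (Fin 2) ℂ :=
  Matrix.of fun a b : Fin 2 => Bblk B r s ((a.val : ZMod 2)) ((b.val : ZMod 2))

lemma listprod_entry {n : ℕ} : ∀ (r : ℕ) (f : Fin (r+1) → Matrix (Fin n) (Fin n) ℂ) (x y : Fin n),
    (List.ofFn f).prod x y
      = ∑ a : Fin r → Fin n, ∏ j : Fin (r+1),
          f j ((Fin.cons x (Fin.snoc a y) : Fin (r+2) → Fin n) j.castSucc)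
            ((Fin.cons x (Fin.snoc a y) : Fin (r+2) → Fin n) j.succ)
  | 0, f, x, y => by
      simp [Fin.snoc]
  | (r+1), f, x, y => by
      rw [List.ofFn_succ, List.prod_cons, Matrix.mul_apply]
      simp_rw [listprod_entry r (fun j => f j.succ)]
      rw [← Equiv.sum_comp (Fin.consEquiv (fun _ : Fin (r+1) => Fin n)), Fintype.sum_prod_type]
      refine Finset.sum_congr rfl fun z _ => ?_
      rw [Finset.mul_sum]
      refine Finset.sum_congr rfl fun a _ => ?_
      have hsc : (Fin.snoc ((Fin.consEquiv fun _ : Fin (r+1) => Fin n) (z, a)) y : Fin (r+2) → Fin n)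
          = (Fin.cons z (Fin.snoc a y : Fin (r+1) → Fin n) : Fin (r+2) → Fin n) :=
        (Fin.cons_snoc_eq_snoc_cons z a y).symm
      symm
      rw [hsc, Fin.prod_univ_succ]
      congr 1

lemma trace_listprod {n r : ℕ} (f : Fin (r+1) → Matrix (Fin n) (Fin n) ℂ) :
    ((List.ofFn f).prod).trace
      = ∑ c : Fin (r+1) → Fin n, ∏ j : Fin (r+1), f j (c j) (c (j + 1)) := by
  rw [← Equiv.sum_comp (Fin.consEquiv (fun _ : Fin (r+1) => Fin n)), Fintype.sum_prod_type,
    Matrix.trace]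
  refine Finset.sum_congr rfl fun x _ => ?_
  rw [Matrix.diag_apply, listprod_entry]
  refine Finset.sum_congr rfl fun a _ => Finset.prod_congr rfl fun j _ => ?_
  have h1 : (Fin.cons x (Fin.snoc a x) : Fin (r+2) → Fin n) j.castSucc
      = ((Fin.consEquiv fun _ : Fin (r+1) => Fin n) (x, a)) j := by
    induction j using Fin.cases with
    | zero => simp
    | succ i => rw [← Fin.succ_castSucc]; simp
  have h2 : (Fin.cons x (Fin.snoc a x) : Fin (r+2) → Fin n) j.succ
      = ((Fin.consEquiv fun _ : Fin (r+1) => Fin n) (x, a)) (j + 1) := by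
    induction j using Fin.lastCases with
    | last =>
        rw [Fin.cons_succ, Fin.snoc_last, Fin.last_add_one]
        simp
    | cast i => rw [Fin.coeSucc_eq_succ]; simp
  rw [h1, h2]

lemma entry_negJ1 {m : ℕ} (B : Matrix (Fin (2 * m)) (Fin (2 * m)) ℂ) (u v : Fin m)
    (a b : Fin 2) :
    ((-J1) * blkM B u v) a b
      = (-1 : ℂ) ^ (((a.val : ZMod 2) + 1).val)
          * Bblk B u v ((a.val : ZMod 2) + 1) ((b.val : ZMod 2)) := by
  have h2 : (2 : ZMod 2) = 0 := by decide
  have hv1 : (1 : ZMod 2).val = 1 := rfl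
  have hv0 : (0 : ZMod 2).val = 0 := rfl
  fin_cases a <;>
    simp [Matrix.mul_apply, Fin.sum_univ_two, J1, blkM, h2, hv1, hv0,
      show (1 + 1 : ZMod 2) = 0 from rfl]

theorem trace_cycle_eq_two_P (m r : ℕ) [NeZero r]
    (B : Matrix (Fin (2 * m)) (Fin (2 * m)) ℂ) (hB : Bᵀ = -B)
    (k : Fin r → Fin m) (hk : Function.Injective k) :
    ((List.ofFn fun j : Fin r => (-J1) * blkM B (k j) (k (j + 1))).prod).trace
      = 2 * Pcyc B k := by
  obtain ⟨s, rfl⟩ := Nat.exists_eq_succ_of_ne_zero (NeZero.ne r)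
  rw [trace_listprod, Pcyc, show ∀ X : ℂ, 2 * ((1/2 : ℂ) * X) = X from fun X => by ring]
  have hbij : Function.Bijective
      (fun (c : Fin (s+1) → Fin 2) (j : Fin (s+1)) => ((c j).val : ZMod 2) + 1) := by
    rw [Fintype.bijective_iff_injective_and_card]
    constructor
    · intro c c' h
      funext j
      have hj : ((c j).val : ZMod 2) + 1 = ((c' j).val : ZMod 2) + 1 := congrFun h j
      have hj2 : ((c j).val : ZMod 2) = ((c' j).val : ZMod 2) := add_right_cancel hj
      have hv : (c j).val = (c' j).val := by
        have := congrArg ZMod.val hj2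
        rwa [ZMod.val_natCast_of_lt (c j).isLt, ZMod.val_natCast_of_lt (c' j).isLt] at this
      exact Fin.ext hv
    · simp [Fintype.card_fun]
  refine Fintype.sum_bijective _ hbij _ _ fun c => ?_
  rw [← Finset.prod_mul_distrib]
  refine Finset.prod_congr rfl fun j _ => ?_
  rw [entry_negJ1]
  congr 1
  rw [show ∀ x : ZMod 2, x + 1 + 1 = x from by decide]
end

section
/- For any cycle τ = (k_1,...,k_r) with k_1 minimal, 2·P(B)(τ) = Q(B)(τ) + Q(B)(τ^{-1}), where Q(B)(k_1,...,k_r) = ∑_{i_2,...,i_r ∈ Z/2Z} (-1)^{i_2+...+i_r} B_{0,i_2+1}(k_1,k_2) B_{i_2,i_3+1}(k_2,k_3) ··· B_{i_r,1}(k_r,k_1) for r ≥ 2, and Q(B)(k_1) = B_{01}(k_1,k_1), and P(B)(τ) = (1/2)∑_{i_1,...,i_r ∈ Z/2Z} (-1)^{i_1+...+i_r} B_{i_1,i_2+1}(k_1,k_2) ··· B_{i_r,i_1+1}(k_r,k_1). -/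
open Matrix
open scoped Classical

/-- `Q(B)(τ)` for the cycle `τ = (k 0, …, k (r-1))`: the sum over
`i : Fin r → ZMod 2` with `i 0 = 0`.  For `r = 1` this is `B₀₁(k 0, k 0)`. -/
noncomputable def Qcyc {m r : ℕ} [NeZero r] (B : Matrix (Fin (2 * m)) (Fin (2 * m)) ℂ)
    (k : Fin r → Fin m) : ℂ :=
  ∑ i ∈ Finset.univ.filter (fun i : Fin r → ZMod 2 => i 0 = 0),
    (∏ j, (-1 : ℂ) ^ (i j).val) * ∏ j, Bblk B (k j) (k (j + 1)) (i j) (i (j + 1) + 1)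

/-!
Split the sum defining `2 P(B)(τ)` according to `i₁ = 0` or `i₁ = 1`; the first half is `Q(B)(τ)`.
The involution `i ↦ (j ↦ i (-j) + 1)` maps the second half onto the index set of `Q(B)(τ⁻¹)`,
and term by term it preserves the summand: each of the `r` signs flips, and by skew-symmetry
`B_{ab}(s,t) = -B_{ba}(t,s)` so does each of the `r` block entries.
-/

lemma neg_one_pow_val_add_one {R : Type*} [Monoid R] [HasDistribNeg R] (a : ZMod 2) :
    (-1 : R) ^ (a + 1).val = -(-1) ^ a.val := by
  have val_one : (1 : ZMod 2).val = 1 := rfl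
  obtain rfl | rfl : a = 0 ∨ a = 1 := by decide +revert
  · simp [val_one]
  · simp [val_one, show (1 + 1 : ZMod 2) = 0 from rfl]

lemma ZMod.two_add_one_eq_zero_iff (a : ZMod 2) : a + 1 = 0 ↔ a ≠ 0 := by
  decide +revert

lemma prod_neg_one_pow_val_reverse {R : Type*} [CommMonoid R] [HasDistribNeg R] {r : ℕ}
    (i : Fin r → ZMod 2) :
    ∏ j, (-1 : R) ^ (i (-j) + 1).val = (-1) ^ r * ∏ j, (-1 : R) ^ (i j).val := by
  simp only [neg_one_pow_val_add_one, Finset.prod_neg, Finset.card_univ, Fintype.card_fin]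
  exact congrArg _ (Fintype.prod_equiv (Equiv.neg _) _ _ fun _ => rfl)

section Cycle

variable {m r : ℕ} [NeZero r] {B : Matrix (Fin (2 * m)) (Fin (2 * m)) ℂ}

lemma Bblk_swap (hB : Bᵀ = -B) (s t : Fin m) (a b : ZMod 2) :
    Bblk B s t a b = -Bblk B t s b a := by
  simpa [Bblk] using congrFun₂ hB _ _

variable (B) in
/-- The common summand of `Pcyc` and `Qcyc`, which unfold to sums of it. -/
def cycTerm (k : Fin r → Fin m) (i : Fin r → ZMod 2) : ℂ :=
  (∏ j, (-1 : ℂ) ^ (i j).val) * ∏ j, Bblk B (k j) (k (j + 1)) (i j) (i (j + 1) + 1)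

lemma prod_Bblk_reverse (hB : Bᵀ = -B) (k : Fin r → Fin m) (i : Fin r → ZMod 2) :
    ∏ j, Bblk B (k (-j)) (k (-(j + 1))) (i (-j) + 1) (i (-(j + 1)) + 1 + 1)
      = (-1) ^ r * ∏ j, Bblk B (k j) (k (j + 1)) (i j) (i (j + 1) + 1) := by
  let e : Fin r ≃ Fin r := (Equiv.neg _).trans (Equiv.subRight 1)
  calc ∏ j, Bblk B (k (-j)) (k (-(j + 1))) (i (-j) + 1) (i (-(j + 1)) + 1 + 1)
      = ∏ j, -Bblk B (k (e j)) (k (e j + 1)) (i (e j)) (i (e j + 1) + 1) := by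
        refine Finset.prod_congr rfl fun j _ => ?_
        simp only [e, Equiv.trans_apply, Equiv.neg_apply, Equiv.subRight_apply, sub_add_cancel,
          neg_add', CharTwo.add_cancel_right]
        exact Bblk_swap hB _ _ _ _
    _ = ∏ j, -Bblk B (k j) (k (j + 1)) (i j) (i (j + 1) + 1) :=
        Equiv.prod_comp e fun j => -Bblk B (k j) (k (j + 1)) (i j) (i (j + 1) + 1)
    _ = _ := by rw [Finset.prod_neg, Finset.card_univ, Fintype.card_fin]

lemma cycTerm_reverse (hB : Bᵀ = -B) (k : Fin r → Fin m) (i : Fin r → ZMod 2) :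
    cycTerm B (fun j => k (-j)) (fun j => i (-j) + 1) = cycTerm B k i := by
  rw [cycTerm, cycTerm, prod_neg_one_pow_val_reverse, prod_Bblk_reverse hB, mul_mul_mul_comm,
    ← pow_add, Even.neg_one_pow ⟨r, rfl⟩, one_mul]

end Cycle

theorem two_P_eq_Q_add_Q_inv_general (m r : ℕ) [NeZero r]
    (B : Matrix (Fin (2 * m)) (Fin (2 * m)) ℂ) (hB : Bᵀ = -B)
    (k : Fin r → Fin m) :
    2 * Pcyc B k = Qcyc B k + Qcyc B (fun j => k (-j)) := by
  let flip : (Fin r → ZMod 2) ≃ (Fin r → ZMod 2) :=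
    Function.Involutive.toPerm (fun i j => i (-j) + 1) fun i => by
      funext j; simp only [neg_neg, CharTwo.add_cancel_right]
  rw [Pcyc, ← mul_assoc, mul_one_div_cancel two_ne_zero, one_mul,
    ← Finset.sum_filter_add_sum_filter_not _ fun i => i 0 = 0]
  refine congrArg _ (Finset.sum_equiv flip (fun i => ?_) fun i _ => (cycTerm_reverse hB k i).symm)
  simp only [Finset.mem_filter, Finset.mem_univ, true_and]
  show ¬i 0 = 0 ↔ i (-0) + 1 = 0
  rw [neg_zero, ZMod.two_add_one_eq_zero_iff]

theorem two_P_eq_Q_add_Q_inv (m r : ℕ) [NeZero r]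
    (B : Matrix (Fin (2 * m)) (Fin (2 * m)) ℂ) (hB : Bᵀ = -B)
    (k : Fin r → Fin m) (hk : Function.Injective k) (hmin : ∀ j, k 0 ≤ k j) :
    2 * Pcyc B k = Qcyc B k + Qcyc B (fun j => k (-j)) :=
  two_P_eq_Q_add_Q_inv_general m r B hB k
end
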